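/- arXiv:2510.24967 — 3 statements merged into one kernel-verified Lean document; each statement's English description precedes it below -/
import Mathlib

section
/- Let f : ℝⁿ → ℝ be twice continuously differentiable, μ-strongly convex with μ > 0, and with L-Lipschitz Hessian, L > 0. Let R ∈ ℝ^{p×n} have full row rank p ≤ n, P := Rᵀ, and suppose all singular values of P lie in [ω, ξ] with 0 < ω ≤ ξ. If x⁺ := x − P(R∇²f(x)P)⁻¹R∇f(x) is the coarse step at x ∈ ℝⁿ, then ‖R∇f(x⁺)‖ ≤ (Lξ⁵/(2μ²ω⁴)) ‖∇f(x)‖². -/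
/-!
Write `g = ∇f(x)`, `H = ∇²f(x)` and `d = P(RHP)⁻¹Rg`, so that `x⁺ = x - d`. The coarse step
solves the Galerkin equation `RHd = Rg`, hence `R∇f(x⁺) = R(∇f(x - d) - g + Hd)` is `R` applied
to a first-order Taylor remainder, of norm at most `(L/2)‖d‖²` by the Lipschitz Hessian.
The singular value bounds say `ω² ≤ RRᵀ ≤ ξ²` in the Loewner order, so `‖R‖ = ‖Rᵀ‖ ≤ ξ` and
`RHRᵀ` is coercive with constant `μω²`; thus `‖d‖ ≤ ξ²/(μω²) ‖g‖`, and
`‖R∇f(x⁺)‖ ≤ ξ (L/2) (ξ²/(μω²))² ‖g‖²`.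
-/

open Matrix

noncomputable section

/-- The spectral (`ℓ²`-operator) norm of a real matrix, i.e. the operator norm of the
induced linear map between Euclidean spaces. -/
def Matrix.specNorm {m n : ℕ} (A : Matrix (Fin m) (Fin n) ℝ) : ℝ :=
  ‖LinearMap.toContinuousLinearMap (Matrix.toEuclideanLin A)‖

/-- The `i`-th singular value of `P := Rᵀ`, i.e. the square root of the `i`-th eigenvalue of
the positive semidefinite matrix `PᴴP = R Rᴴ`. -/
def Matrix.singularValueT {p n : ℕ} (R : Matrix (Fin p) (Fin n) ℝ) (i : Fin p) : ℝ :=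
  Real.sqrt ((Matrix.isHermitian_mul_conjTranspose_self R).eigenvalues i)

theorem norm_sub_sub_fderiv_le_of_lipschitz_fderiv {E F : Type*} [NormedAddCommGroup E]
    [NormedSpace ℝ E] [NormedAddCommGroup F] [NormedSpace ℝ F] {g : E → F} {g' : E → E →L[ℝ] F}
    {L : ℝ} (hg : ∀ y, HasFDerivAt g (g' y) y) (x d : E)
    (hLip : ∀ y, ‖g' y - g' x‖ ≤ L * ‖y - x‖) :
    ‖g (x + d) - g x - g' x d‖ ≤ L / 2 * ‖d‖ ^ 2 := by
  -- `‖φ'‖` grows at most linearly in `t`, so `‖φ‖` stays below the parabola `L‖d‖²t²/2`.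
  let φ : ℝ → F := fun t => g (x + t • d) - g x - t • g' x d
  have hφ : ∀ t, HasDerivAt φ ((g' (x + t • d) - g' x) d) t := by
    intro t
    have hline : HasDerivAt (fun t : ℝ => x + t • d) d t := by
      simpa using ((hasDerivAt_id t).smul_const d).const_add x
    have hlin : HasDerivAt (fun t : ℝ => t • g' x d) (g' x d) t := by
      simpa using (hasDerivAt_id t).smul_const (g' x d)
    exact (((hg _).comp_hasDerivAt t hline).sub_const (g x)).sub hlin
  have hφ' : ∀ t ∈ Set.Ico (0 : ℝ) 1, ‖(g' (x + t • d) - g' x) d‖ ≤ L * ‖d‖ ^ 2 * t := by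
    rintro t ⟨ht0, -⟩
    calc ‖(g' (x + t • d) - g' x) d‖ ≤ ‖g' (x + t • d) - g' x‖ * ‖d‖ :=
          ContinuousLinearMap.le_opNorm _ _
      _ ≤ L * ‖t • d‖ * ‖d‖ := by gcongr; simpa using hLip (x + t • d)
      _ = L * ‖d‖ ^ 2 * t := by rw [norm_smul, Real.norm_of_nonneg ht0]; ring
  have hB : ∀ t : ℝ, HasDerivAt (fun t => L / 2 * ‖d‖ ^ 2 * t ^ 2) (L * ‖d‖ ^ 2 * t) t := by
    intro t
    exact ((hasDerivAt_pow 2 t).const_mul (L / 2 * ‖d‖ ^ 2)).congr_deriv (by push_cast; ring)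
  simpa [φ] using image_norm_le_of_norm_deriv_right_le_deriv_boundary
    (fun t _ => (hφ t).continuousAt.continuousWithinAt) (fun t _ => (hφ t).hasDerivWithinAt)
    (by simp [φ]) hB hφ' (Set.right_mem_Icc.2 zero_le_one)

namespace Matrix

open scoped RealInnerProductSpace MatrixOrder

section Loewner

variable {𝕜 n : Type*} [RCLike 𝕜] [Fintype n] [DecidableEq n] {A : Matrix n n 𝕜}

lemma IsHermitian.smul_one_le_of_le_eigenvalues (hA : A.IsHermitian) {c : ℝ}
    (h : ∀ i, c ≤ hA.eigenvalues i) : c • 1 ≤ A := by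
  rw [← Algebra.algebraMap_eq_smul_one, algebraMap_le_iff_le_spectrum hA.isSelfAdjoint,
    hA.spectrum_real_eq_range_eigenvalues]
  rintro _ ⟨i, rfl⟩
  exact h i

lemma IsHermitian.le_smul_one_of_eigenvalues_le (hA : A.IsHermitian) {c : ℝ}
    (h : ∀ i, hA.eigenvalues i ≤ c) : A ≤ c • 1 := by
  rw [← Algebra.algebraMap_eq_smul_one, le_algebraMap_iff_spectrum_le hA.isSelfAdjoint,
    hA.spectrum_real_eq_range_eigenvalues]
  rintro _ ⟨i, rfl⟩
  exact h i

end Loewner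

section Euclidean

variable {l m n : Type*} [Fintype m] [Fintype n] [DecidableEq m] [DecidableEq n]

lemma toEuclideanLin_mul_apply (A : Matrix l m ℝ) (B : Matrix m n ℝ) (v : EuclideanSpace ℝ n) :
    toEuclideanLin (A * B) v = toEuclideanLin A (toEuclideanLin B v) := by
  simp

lemma inner_toEuclideanLin_right (A : Matrix m n ℝ) (x : EuclideanSpace ℝ m)
    (y : EuclideanSpace ℝ n) : ⟪x, toEuclideanLin A y⟫ = ⟪toEuclideanLin Aᵀ x, y⟫ := by
  rw [← conjTranspose_eq_transpose_of_trivial, toEuclideanLin_conjTranspose_eq_adjoint,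
    LinearMap.adjoint_inner_left]

lemma norm_toEuclideanLin_sq (A : Matrix m n ℝ) (v : EuclideanSpace ℝ n) :
    ‖toEuclideanLin A v‖ ^ 2 = ⟪v, toEuclideanLin (Aᵀ * A) v⟫ := by
  rw [toEuclideanLin_mul_apply, inner_toEuclideanLin_right, transpose_transpose,
    real_inner_self_eq_norm_sq]

lemma inner_toEuclideanLin_le_of_le {A B : Matrix n n ℝ} (h : A ≤ B) (v : EuclideanSpace ℝ n) :
    ⟪v, toEuclideanLin A v⟫ ≤ ⟪v, toEuclideanLin B v⟫ := by
  have := (le_iff.mp h).dotProduct_mulVec_nonneg (WithLp.ofLp v)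
  simp only [star_trivial, sub_mulVec, dotProduct_sub, sub_nonneg] at this
  simpa [toLpLin_apply, PiLp.inner_apply, dotProduct, mul_comm] using this

lemma inner_toEuclideanLin_smul_one (c : ℝ) (v : EuclideanSpace ℝ n) :
    ⟪v, toEuclideanLin (c • 1 : Matrix n n ℝ) v⟫ = c * ‖v‖ ^ 2 := by
  simp [real_inner_smul_right]

end Euclidean

section SpecNorm

variable {m n : ℕ}

lemma norm_toEuclideanLin_le_specNorm (A : Matrix (Fin m) (Fin n) ℝ)
    (v : EuclideanSpace ℝ (Fin n)) : ‖toEuclideanLin A v‖ ≤ A.specNorm * ‖v‖ :=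
  (LinearMap.toContinuousLinearMap (toEuclideanLin A)).le_opNorm v

lemma specNorm_transpose (A : Matrix (Fin m) (Fin n) ℝ) : Aᵀ.specNorm = A.specNorm := by
  open scoped Matrix.Norms.L2Operator in
  have := l2_opNorm_conjTranspose A
  rwa [conjTranspose_eq_transpose_of_trivial] at this

lemma norm_toEuclideanLin_le_of_specNorm_le {A : Matrix (Fin m) (Fin n) ℝ} {c : ℝ}
    (h : A.specNorm ≤ c) (v : EuclideanSpace ℝ (Fin n)) : ‖toEuclideanLin A v‖ ≤ c * ‖v‖ :=
  (norm_toEuclideanLin_le_specNorm A v).trans (by gcongr)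

lemma norm_toEuclideanCLM (A : Matrix (Fin n) (Fin n) ℝ) :
    ‖toEuclideanCLM (𝕜 := ℝ) A‖ = A.specNorm :=
  rfl

end SpecNorm

section SingularValues

variable {p n : ℕ} (R : Matrix (Fin p) (Fin n) ℝ)

lemma sq_smul_one_le_mul_transpose {ω : ℝ} (hω : 0 ≤ ω) (h : ∀ i, ω ≤ R.singularValueT i) :
    ω ^ 2 • 1 ≤ R * Rᵀ := by
  rw [← conjTranspose_eq_transpose_of_trivial]
  exact IsHermitian.smul_one_le_of_le_eigenvalues (isHermitian_mul_conjTranspose_self R) fun i =>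
    (Real.le_sqrt hω (eigenvalues_self_mul_conjTranspose_nonneg R i)).1 (h i)

lemma mul_transpose_le_sq_smul_one {ξ : ℝ} (h : ∀ i, R.singularValueT i ≤ ξ) :
    R * Rᵀ ≤ ξ ^ 2 • 1 := by
  rw [← conjTranspose_eq_transpose_of_trivial]
  exact IsHermitian.le_smul_one_of_eigenvalues_le (isHermitian_mul_conjTranspose_self R) fun i =>
    (Real.sqrt_le_iff.1 (h i)).2

lemma mul_norm_le_norm_toEuclideanLin_transpose {ω : ℝ} (hω : 0 ≤ ω)
    (h : ∀ i, ω ≤ R.singularValueT i) (v : EuclideanSpace ℝ (Fin p)) :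
    ω * ‖v‖ ≤ ‖toEuclideanLin Rᵀ v‖ := by
  rw [← pow_le_pow_iff_left₀ (by positivity) (norm_nonneg _) two_ne_zero, mul_pow,
    norm_toEuclideanLin_sq, transpose_transpose, ← inner_toEuclideanLin_smul_one]
  exact inner_toEuclideanLin_le_of_le (sq_smul_one_le_mul_transpose R hω h) v

lemma specNorm_transpose_le {ξ : ℝ} (hξ : 0 ≤ ξ) (h : ∀ i, R.singularValueT i ≤ ξ) :
    Rᵀ.specNorm ≤ ξ := by
  refine ContinuousLinearMap.opNorm_le_bound _ hξ fun v => ?_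
  rw [LinearMap.coe_toContinuousLinearMap',
    ← pow_le_pow_iff_left₀ (norm_nonneg _) (by positivity) two_ne_zero, mul_pow,
    norm_toEuclideanLin_sq, transpose_transpose, ← inner_toEuclideanLin_smul_one]
  exact inner_toEuclideanLin_le_of_le (mul_transpose_le_sq_smul_one R h) v

end SingularValues

variable {m n : Type*} [Fintype m] [Fintype n] [DecidableEq m] [DecidableEq n]

def IsCoerciveWith (A : Matrix n n ℝ) (a : ℝ) : Prop :=
  ∀ v : EuclideanSpace ℝ n, a * ‖v‖ ^ 2 ≤ ⟪v, toEuclideanLin A v⟫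

namespace IsCoerciveWith

variable {A : Matrix n n ℝ} {a : ℝ}

lemma of_smul_one_le (h : a • 1 ≤ A) : A.IsCoerciveWith a := fun v => by
  rw [← inner_toEuclideanLin_smul_one]
  exact inner_toEuclideanLin_le_of_le h v

lemma mul_norm_le_norm_toEuclideanLin (h : A.IsCoerciveWith a) (v : EuclideanSpace ℝ n) :
    a * ‖v‖ ≤ ‖toEuclideanLin A v‖ := by
  rcases (norm_nonneg v).eq_or_lt with hv | hv
  · rw [← hv, mul_zero]
    exact norm_nonneg _
  · refine le_of_mul_le_mul_right ?_ hv
    calc a * ‖v‖ * ‖v‖ = a * ‖v‖ ^ 2 := by ring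
      _ ≤ ⟪v, toEuclideanLin A v⟫ := h v
      _ ≤ ‖v‖ * ‖toEuclideanLin A v‖ := real_inner_le_norm _ _
      _ = ‖toEuclideanLin A v‖ * ‖v‖ := mul_comm _ _

lemma isUnit (h : A.IsCoerciveWith a) (ha : 0 < a) : IsUnit A := by
  refine mulVec_injective_iff_isUnit.1 fun u w huw => ?_
  have := h.mul_norm_le_norm_toEuclideanLin (WithLp.toLp 2 (u - w))
  simp only [WithLp.toLp_sub, toLpLin_apply, WithLp.ofLp_sub, mulVec_sub, huw, sub_self,
    WithLp.toLp_zero, norm_zero] at this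
  simpa [sub_eq_zero] using nonpos_of_mul_nonpos_right this ha

lemma norm_toEuclideanLin_inv_le (h : A.IsCoerciveWith a) (ha : 0 < a)
    (u : EuclideanSpace ℝ n) : ‖toEuclideanLin A⁻¹ u‖ ≤ a⁻¹ * ‖u‖ := by
  have hA := (isUnit_iff_isUnit_det A).1 (h.isUnit ha)
  have := h.mul_norm_le_norm_toEuclideanLin (toEuclideanLin A⁻¹ u)
  rw [← toEuclideanLin_mul_apply, mul_nonsing_inv A hA, toLpLin_one, LinearMap.id_apply] at this
  rwa [le_inv_mul_iff₀ ha]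

lemma mul_mul_transpose {H : Matrix n n ℝ} {μ ω : ℝ} (hH : H.IsCoerciveWith μ) (hμ : 0 ≤ μ)
    {R : Matrix m n ℝ} (hR : ∀ v, ω * ‖v‖ ≤ ‖toEuclideanLin Rᵀ v‖) (hω : 0 ≤ ω) :
    (R * H * Rᵀ).IsCoerciveWith (μ * ω ^ 2) := fun v => by
  rw [Matrix.mul_assoc, toEuclideanLin_mul_apply, inner_toEuclideanLin_right,
    toEuclideanLin_mul_apply]
  calc μ * ω ^ 2 * ‖v‖ ^ 2 = μ * (ω * ‖v‖) ^ 2 := by ring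
    _ ≤ μ * ‖toEuclideanLin Rᵀ v‖ ^ 2 := by gcongr; exact hR v
    _ ≤ _ := hH _

end IsCoerciveWith

lemma mul_mul_mul_inv_mul_cancel {m n α : Type*} [Fintype m] [Fintype n] [DecidableEq m]
    [CommRing α] (R : Matrix m n α) (H : Matrix n n α)
    (P : Matrix n m α) (h : IsUnit (R * H * P)) : R * H * (P * (R * H * P)⁻¹ * R) = R := by
  rw [← Matrix.mul_assoc, ← Matrix.mul_assoc, mul_nonsing_inv _ ((isUnit_iff_isUnit_det _).1 h),
    Matrix.one_mul]

lemma norm_toEuclideanLin_transpose_mul_inv_mul_le {p n : ℕ} {R : Matrix (Fin p) (Fin n) ℝ}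
    {H : Matrix (Fin n) (Fin n) ℝ} {ξ a : ℝ} (hRT : Rᵀ.specNorm ≤ ξ)
    (hQ : (R * H * Rᵀ).IsCoerciveWith a) (ha : 0 < a) (g : EuclideanSpace ℝ (Fin n)) :
    ‖toEuclideanLin (Rᵀ * (R * H * Rᵀ)⁻¹ * R) g‖ ≤ ξ ^ 2 / a * ‖g‖ := by
  have hξ : 0 ≤ ξ := (norm_nonneg _).trans hRT
  rw [toEuclideanLin_mul_apply, toEuclideanLin_mul_apply]
  calc _ ≤ ξ * (a⁻¹ * (ξ * ‖g‖)) := by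
        refine (norm_toEuclideanLin_le_of_specNorm_le hRT _).trans
          (mul_le_mul_of_nonneg_left ((hQ.norm_toEuclideanLin_inv_le ha _).trans ?_) hξ)
        gcongr
        exact norm_toEuclideanLin_le_of_specNorm_le (specNorm_transpose R ▸ hRT) g
    _ = ξ ^ 2 / a * ‖g‖ := by ring

end Matrix

theorem norm_reduced_grad_coarse_step_le_sq_grad_general
    {n p : ℕ}
    (f : EuclideanSpace ℝ (Fin n) → ℝ)
    (Hess : EuclideanSpace ℝ (Fin n) → Matrix (Fin n) (Fin n) ℝ)
    (hHess : ∀ y, HasFDerivAt (gradient f) (Matrix.toEuclideanCLM (𝕜 := ℝ) (Hess y)) y)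
    (μ L : ℝ) (hμ : 0 < μ) (hL : 0 < L)
    (hsc : ∀ y, (Hess y - μ • (1 : Matrix (Fin n) (Fin n) ℝ)).PosSemidef)
    (hLip : ∀ y z, Matrix.specNorm (Hess y - Hess z) ≤ L * ‖y - z‖)
    (R : Matrix (Fin p) (Fin n) ℝ)
    (ω ξ : ℝ) (hω : 0 < ω) (hωξ : ω ≤ ξ)
    (hsv : ∀ i, R.singularValueT i ∈ Set.Icc ω ξ)
    (x xp : EuclideanSpace ℝ (Fin n))
    (hxp : xp = x - Matrix.toEuclideanLin (Rᵀ * (R * Hess x * Rᵀ)⁻¹ * R) (gradient f x)) :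
    ‖Matrix.toEuclideanLin R (gradient f xp)‖ ≤
      L * ξ ^ 5 / (2 * μ ^ 2 * ω ^ 4) * ‖gradient f x‖ ^ 2 := by
  have hξ : 0 ≤ ξ := hω.le.trans hωξ
  have hRT : Rᵀ.specNorm ≤ ξ := specNorm_transpose_le R hξ fun i => (hsv i).2
  have hQ : (R * Hess x * Rᵀ).IsCoerciveWith (μ * ω ^ 2) :=
    (IsCoerciveWith.of_smul_one_le (hsc x)).mul_mul_transpose hμ.le
      (mul_norm_le_norm_toEuclideanLin_transpose R hω.le fun i => (hsv i).1) hω.le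
  set g := gradient f x
  set d := toEuclideanLin (Rᵀ * (R * Hess x * Rᵀ)⁻¹ * R) g with hd
  have hRHd : toEuclideanLin R (toEuclideanLin (Hess x) d) = toEuclideanLin R g := by
    rw [hd, ← toEuclideanLin_mul_apply, ← toEuclideanLin_mul_apply,
      mul_mul_mul_inv_mul_cancel _ _ _ (hQ.isUnit (by positivity))]
  have htaylor : ‖gradient f (x + -d) - g - toEuclideanLin (Hess x) (-d)‖ ≤ L / 2 * ‖-d‖ ^ 2 :=
    norm_sub_sub_fderiv_le_of_lipschitz_fderiv hHess x (-d) fun y => by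
      rw [← map_sub, norm_toEuclideanCLM]
      exact hLip y x
  have hres : toEuclideanLin R (gradient f xp) =
      toEuclideanLin R (gradient f (x + -d) - g - toEuclideanLin (Hess x) (-d)) := by
    rw [hxp, ← sub_eq_add_neg, map_sub, map_sub, map_neg, map_neg, hRHd, sub_neg_eq_add,
      sub_add_cancel]
  calc ‖toEuclideanLin R (gradient f xp)‖ ≤ ξ * (L / 2 * ‖-d‖ ^ 2) := by
        rw [hres]
        exact (norm_toEuclideanLin_le_of_specNorm_le (specNorm_transpose R ▸ hRT) _).trans
          (by gcongr)
    _ ≤ ξ * (L / 2 * (ξ ^ 2 / (μ * ω ^ 2) * ‖g‖) ^ 2) := by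
        rw [norm_neg]
        gcongr
        exact norm_toEuclideanLin_transpose_mul_inv_mul_le hRT hQ (by positivity) g
    _ = L * ξ ^ 5 / (2 * μ ^ 2 * ω ^ 4) * ‖g‖ ^ 2 := by field_simp

/-- One coarse step of the multilevel Newton method satisfies
`‖R∇f(x⁺)‖ ≤ (Lξ⁵/(2μ²ω⁴)) ‖∇f(x)‖²`. -/
theorem norm_reduced_grad_coarse_step_le_sq_grad
    {n p : ℕ} (hp : p ≤ n)
    (f : EuclideanSpace ℝ (Fin n) → ℝ)
    (hf : ContDiff ℝ 2 f)
    (Hess : EuclideanSpace ℝ (Fin n) → Matrix (Fin n) (Fin n) ℝ)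
    (hHess : ∀ y, HasFDerivAt (gradient f) (Matrix.toEuclideanCLM (𝕜 := ℝ) (Hess y)) y)
    (μ L : ℝ) (hμ : 0 < μ) (hL : 0 < L)
    (hsc : ∀ y, (Hess y - μ • (1 : Matrix (Fin n) (Fin n) ℝ)).PosSemidef)
    (hLip : ∀ y z, Matrix.specNorm (Hess y - Hess z) ≤ L * ‖y - z‖)
    (R : Matrix (Fin p) (Fin n) ℝ) (hR : R.rank = p)
    (ω ξ : ℝ) (hω : 0 < ω) (hωξ : ω ≤ ξ)
    (hsv : ∀ i, R.singularValueT i ∈ Set.Icc ω ξ)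
    (x xp : EuclideanSpace ℝ (Fin n))
    (hxp : xp = x - Matrix.toEuclideanLin (Rᵀ * (R * Hess x * Rᵀ)⁻¹ * R) (gradient f x)) :
    ‖Matrix.toEuclideanLin R (gradient f xp)‖ ≤
      L * ξ ^ 5 / (2 * μ ^ 2 * ω ^ 4) * ‖gradient f x‖ ^ 2 :=
  norm_reduced_grad_coarse_step_le_sq_grad_general f Hess hHess μ L hμ hL hsc hLip R ω ξ hω hωξ hsv
    x xp hxp

end
end

section
/- Let f : ℝⁿ → ℝ be twice continuously differentiable, μ-strongly convex with μ > 0, and with L-Lipschitz Hessian, L > 0. Let σ ∈ (0,1] and 0 < ω ≤ ξ ≤ 1. Suppose x⁺ ∈ ℝⁿ is obtained from x ∈ ℝⁿ in one of the following two ways: (a) x⁺ = x − P(R∇²f(x)P)⁻¹R∇f(x) is a coarse step for some full-row-rank R ∈ ℝ^{p×n} with P := Rᵀ whose singular values all lie in [ω, ξ], and the acceptance condition ‖R∇f(x⁺)‖ ≥ σ‖∇f(x⁺)‖ holds; or (b) x⁺ = x − ∇²f(x)⁻¹∇f(x) is the full Newton step. Then ‖∇f(x⁺)‖ ≤ (Lξ⁴/(2σμ²ω⁴))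 ‖∇f(x)‖². -/
open Matrix

noncomputable section

/-!
Write `g = ∇f`, `H = ∇²f(x)`, `P = Rᵀ` and `s = P (R H P)⁻¹ R g(x)`, so that `x⁺ = x - s`. The
singular values of `P` give `ω‖w‖ ≤ ‖P w‖ ≤ ξ‖w‖` and `‖R‖ ≤ ξ`, hence `R H P` is `μω²`-coercive
and `‖s‖ ≤ ξ²/(μω²) ‖g(x)‖`. Since `R H s = R g(x)`, the vector `R g(x⁺)` is `R` applied to the
Taylor remainder `g(x⁺) - g(x) - H (x⁺ - x)`, whose norm is at most `L/2 ‖s‖²` because the Hessian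
is `L`-Lipschitz. The acceptance test `σ‖g(x⁺)‖ ≤ ‖R g(x⁺)‖` then gives the rate, with `ξ⁵ ≤ ξ⁴`.
The full Newton step is the case `R = 1`, `σ = ω = ξ = 1`.
-/

open scoped RealInnerProductSpace

theorem norm_sub_sub_fderiv_apply_le {E F : Type*} [NormedAddCommGroup E] [NormedSpace ℝ E]
    [NormedAddCommGroup F] [NormedSpace ℝ F] {g : E → F} {g' : E → E →L[ℝ] F} {L : ℝ} {x : E}
    (hg : ∀ y, HasFDerivAt g (g' y) y) (hLip : ∀ y, ‖g' y - g' x‖ ≤ L * ‖y - x‖) (y : E) :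
    ‖g y - g x - g' x (y - x)‖ ≤ L / 2 * ‖y - x‖ ^ 2 := by
  set d := y - x
  set φ : ℝ → F := fun t ↦ g (x + t • d) - g x - t • g' x d
  have hφ (t : ℝ) : HasDerivAt φ ((g' (x + t • d) - g' x) d) t := by
    have hline : HasDerivAt (fun t : ℝ ↦ x + t • d) d t := by
      simpa using ((hasDerivAt_id t).smul_const d).const_add x
    exact ((((hg _).comp_hasDerivAt t hline).sub_const (g x)).sub
      ((hasDerivAt_id t).smul_const (g' x d))).congr_deriv (by simp)
  have hB (t : ℝ) : HasDerivAt (fun t ↦ L / 2 * ‖d‖ ^ 2 * t ^ 2) (L * ‖d‖ ^ 2 * t) t :=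
    ((hasDerivAt_pow 2 t).const_mul _).congr_deriv (by push_cast; ring)
  have hφ' (t : ℝ) (ht : t ∈ Set.Ico (0 : ℝ) 1) : ‖(g' (x + t • d) - g' x) d‖ ≤ L * ‖d‖ ^ 2 * t :=
    calc ‖(g' (x + t • d) - g' x) d‖ ≤ ‖g' (x + t • d) - g' x‖ * ‖d‖ :=
          ContinuousLinearMap.le_opNorm _ _
      _ ≤ L * ‖x + t • d - x‖ * ‖d‖ := mul_le_mul_of_nonneg_right (hLip _) (norm_nonneg d)
      _ = L * ‖d‖ ^ 2 * t := by
          rw [add_sub_cancel_left, norm_smul, Real.norm_of_nonneg ht.1]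
          ring
  have hφ1 := image_norm_le_of_norm_deriv_right_le_deriv_boundary
    (fun t _ ↦ (hφ t).continuousAt.continuousWithinAt) (fun t _ ↦ (hφ t).hasDerivWithinAt)
    (by simp [φ]) hB hφ' (Set.right_mem_Icc.2 zero_le_one)
  simpa [φ, d] using hφ1

namespace Matrix

theorem mul_mul_nonsing_inv_mul_eq {ι κ α : Type*} [Fintype ι] [Fintype κ] [DecidableEq κ]
    [CommRing α] (R : Matrix κ ι α) (H : Matrix ι ι α) (P : Matrix ι κ α)
    (h : IsUnit (R * H * P).det) : R * H * (P * (R * H * P)⁻¹ * R) = R := by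
  rw [← Matrix.mul_assoc, ← Matrix.mul_assoc, mul_nonsing_inv _ h, Matrix.one_mul]

variable {ι κ : Type*} [Fintype ι] [Fintype κ] [DecidableEq ι] [DecidableEq κ]

theorem inner_toEuclideanLin_transpose (R : Matrix κ ι ℝ)
    (w : EuclideanSpace ℝ κ) (v : EuclideanSpace ℝ ι) :
    ⟪toEuclideanLin Rᵀ w, v⟫ = ⟪w, toEuclideanLin R v⟫ := by
  rw [← conjTranspose_eq_transpose_of_trivial, toEuclideanLin_conjTranspose_eq_adjoint,
    LinearMap.adjoint_inner_left]

theorem norm_toEuclideanLin_le_of_norm_transpose_le {R : Matrix κ ι ℝ}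
    {ξ : ℝ} (hξ : 0 ≤ ξ) (h : ∀ w, ‖toEuclideanLin Rᵀ w‖ ≤ ξ * ‖w‖) (v : EuclideanSpace ℝ ι) :
    ‖toEuclideanLin R v‖ ≤ ξ * ‖v‖ := by
  set u := toEuclideanLin R v
  have hsq : ‖u‖ * ‖u‖ ≤ ξ * ‖v‖ * ‖u‖ :=
    calc ‖u‖ * ‖u‖ = ⟪toEuclideanLin Rᵀ u, v⟫ := by
          rw [inner_toEuclideanLin_transpose, real_inner_self_eq_norm_mul_norm]
      _ ≤ ‖toEuclideanLin Rᵀ u‖ * ‖v‖ := real_inner_le_norm _ _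
      _ ≤ ξ * ‖u‖ * ‖v‖ := mul_le_mul_of_nonneg_right (h u) (norm_nonneg v)
      _ = ξ * ‖v‖ * ‖u‖ := by ring
  rcases (norm_nonneg u).eq_or_lt with hu | hu
  · rw [← hu]; positivity
  · exact le_of_mul_le_mul_right hsq hu

theorem PosSemidef.mul_norm_sq_le_inner_toEuclideanLin {H : Matrix ι ι ℝ} {μ : ℝ}
    (h : (H - μ • 1).PosSemidef) (v : EuclideanSpace ℝ ι) :
    μ * ‖v‖ ^ 2 ≤ ⟪v, toEuclideanLin H v⟫ := by
  have hpos := (isPositive_toEuclideanLin_iff.mpr h).inner_nonneg_right v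
  simp only [map_sub, map_smul, toLpLin_one, LinearMap.sub_apply, LinearMap.smul_apply,
    LinearMap.id_apply, inner_sub_right, real_inner_smul_right, real_inner_self_eq_norm_sq] at hpos
  linarith

theorem mul_norm_le_norm_toEuclideanLin {M : Matrix ι ι ℝ} {c : ℝ}
    (hM : ∀ v, c * ‖v‖ ^ 2 ≤ ⟪v, toEuclideanLin M v⟫) (v : EuclideanSpace ℝ ι) :
    c * ‖v‖ ≤ ‖toEuclideanLin M v‖ := by
  rcases (norm_nonneg v).eq_or_lt with hv | hv
  · rw [← hv, mul_zero]; exact norm_nonneg _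
  · refine le_of_mul_le_mul_right ?_ hv
    calc c * ‖v‖ * ‖v‖ = c * ‖v‖ ^ 2 := by ring
      _ ≤ ⟪v, toEuclideanLin M v⟫ := hM v
      _ ≤ ‖v‖ * ‖toEuclideanLin M v‖ := real_inner_le_norm _ _
      _ = ‖toEuclideanLin M v‖ * ‖v‖ := mul_comm _ _

theorem isUnit_det_of_coercive {M : Matrix ι ι ℝ} {c : ℝ} (hc : 0 < c)
    (hM : ∀ v, c * ‖v‖ ^ 2 ≤ ⟪v, toEuclideanLin M v⟫) : IsUnit M.det := by
  refine Ne.isUnit fun hdet ↦ ?_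
  obtain ⟨v, hv, hMv⟩ := exists_mulVec_eq_zero_iff.mpr hdet
  have hbound := mul_norm_le_norm_toEuclideanLin hM (WithLp.toLp 2 v)
  simp only [toLpLin_toLp, toLin'_apply, hMv, WithLp.toLp_zero, norm_zero] at hbound
  have hv' : 0 < ‖WithLp.toLp 2 v‖ := norm_pos_iff.mpr (by simpa using hv)
  exact hbound.not_gt (mul_pos hc hv')

theorem norm_toEuclideanLin_inv_le {M : Matrix ι ι ℝ} {c : ℝ} (hc : 0 < c)
    (hM : ∀ v, c * ‖v‖ ^ 2 ≤ ⟪v, toEuclideanLin M v⟫) (u : EuclideanSpace ℝ ι) :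
    ‖toEuclideanLin M⁻¹ u‖ ≤ c⁻¹ * ‖u‖ := by
  have h := mul_norm_le_norm_toEuclideanLin hM (toEuclideanLin M⁻¹ u)
  rwa [← LinearMap.comp_apply, ← toLpLin_mul_same, mul_nonsing_inv _ (isUnit_det_of_coercive hc hM),
    toLpLin_one, LinearMap.id_apply, ← le_inv_mul_iff₀ hc] at h

theorem IsHermitian.inner_toEuclideanLin_self_eq_sum {M : Matrix ι ι ℝ} (hM : M.IsHermitian)
    (w : EuclideanSpace ℝ ι) :
    ⟪w, toEuclideanLin M w⟫ = ∑ i, hM.eigenvalues i * ⟪hM.eigenvectorBasis i, w⟫ ^ 2 := by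
  rw [← hM.eigenvectorBasis.sum_inner_mul_inner w (toEuclideanLin M w)]
  refine Finset.sum_congr rfl fun i _ ↦ ?_
  have hMb : toEuclideanLin M (hM.eigenvectorBasis i) =
      hM.eigenvalues i • hM.eigenvectorBasis i :=
    WithLp.ofLp_injective 2 (by simpa using hM.mulVec_eigenvectorBasis i)
  rw [← (isSymmetric_toEuclideanLin_iff.mpr hM) (hM.eigenvectorBasis i) w, hMb,
    real_inner_smul_left, real_inner_comm w]
  ring

theorem IsHermitian.mul_norm_sq_le_inner_toEuclideanLin {M : Matrix ι ι ℝ} (hM : M.IsHermitian)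
    {a : ℝ} (ha : ∀ i, a ≤ hM.eigenvalues i) (w : EuclideanSpace ℝ ι) :
    a * ‖w‖ ^ 2 ≤ ⟪w, toEuclideanLin M w⟫ := by
  rw [hM.inner_toEuclideanLin_self_eq_sum, ← hM.eigenvectorBasis.sum_sq_inner_right, Finset.mul_sum]
  exact Finset.sum_le_sum fun i _ ↦ mul_le_mul_of_nonneg_right (ha i) (sq_nonneg _)

theorem IsHermitian.inner_toEuclideanLin_le_mul_norm_sq {M : Matrix ι ι ℝ} (hM : M.IsHermitian)
    {b : ℝ} (hb : ∀ i, hM.eigenvalues i ≤ b) (w : EuclideanSpace ℝ ι) :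
    ⟪w, toEuclideanLin M w⟫ ≤ b * ‖w‖ ^ 2 := by
  rw [hM.inner_toEuclideanLin_self_eq_sum, ← hM.eigenvectorBasis.sum_sq_inner_right, Finset.mul_sum]
  exact Finset.sum_le_sum fun i _ ↦ mul_le_mul_of_nonneg_right (hb i) (sq_nonneg _)

theorem norm_toEuclideanLin_transpose_sq (R : Matrix κ ι ℝ) (w : EuclideanSpace ℝ κ) :
    ‖toEuclideanLin Rᵀ w‖ ^ 2 = ⟪w, toEuclideanLin (R * Rᴴ) w⟫ := by
  rw [← real_inner_self_eq_norm_sq, inner_toEuclideanLin_transpose,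
    conjTranspose_eq_transpose_of_trivial, toLpLin_mul_same, LinearMap.comp_apply]

theorem mul_norm_le_norm_toEuclideanLin_transpose_of_le_singularValueT {p n : ℕ}
    {R : Matrix (Fin p) (Fin n) ℝ} {ω : ℝ} (hω : 0 < ω) (h : ∀ i, ω ≤ R.singularValueT i)
    (w : EuclideanSpace ℝ (Fin p)) :
    ω * ‖w‖ ≤ ‖toEuclideanLin Rᵀ w‖ := by
  refine le_of_pow_le_pow_left₀ two_ne_zero (norm_nonneg _) ?_
  rw [mul_pow, norm_toEuclideanLin_transpose_sq]
  exact (isHermitian_mul_conjTranspose_self R).mul_norm_sq_le_inner_toEuclideanLin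
    (fun i ↦ (Real.le_sqrt' hω).mp (h i)) w

theorem norm_toEuclideanLin_transpose_le_of_singularValueT_le {p n : ℕ}
    {R : Matrix (Fin p) (Fin n) ℝ} {ξ : ℝ} (hξ : 0 ≤ ξ) (h : ∀ i, R.singularValueT i ≤ ξ)
    (w : EuclideanSpace ℝ (Fin p)) :
    ‖toEuclideanLin Rᵀ w‖ ≤ ξ * ‖w‖ := by
  refine le_of_pow_le_pow_left₀ two_ne_zero (by positivity) ?_
  rw [mul_pow, norm_toEuclideanLin_transpose_sq]
  exact (isHermitian_mul_conjTranspose_self R).inner_toEuclideanLin_le_mul_norm_sq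
    (fun i ↦ (Real.sqrt_le_left hξ).mp (h i)) w

variable {H : Matrix ι ι ℝ} {R : Matrix κ ι ℝ} {μ ω ξ : ℝ}

theorem mul_norm_sq_le_inner_toEuclideanLin_mul_mul_transpose (hμ : 0 ≤ μ)
    (hH : ∀ v, μ * ‖v‖ ^ 2 ≤ ⟪v, toEuclideanLin H v⟫) (hω : 0 ≤ ω)
    (hlow : ∀ w, ω * ‖w‖ ≤ ‖toEuclideanLin Rᵀ w‖) (w : EuclideanSpace ℝ κ) :
    μ * ω ^ 2 * ‖w‖ ^ 2 ≤ ⟪w, toEuclideanLin (R * H * Rᵀ) w⟫ :=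
  calc μ * ω ^ 2 * ‖w‖ ^ 2 = μ * (ω * ‖w‖) ^ 2 := by ring
    _ ≤ μ * ‖toEuclideanLin Rᵀ w‖ ^ 2 := by gcongr; exact hlow w
    _ ≤ ⟪toEuclideanLin Rᵀ w, toEuclideanLin H (toEuclideanLin Rᵀ w)⟫ := hH _
    _ = ⟪w, toEuclideanLin (R * H * Rᵀ) w⟫ := by
      rw [inner_toEuclideanLin_transpose, toLpLin_mul_same, toLpLin_mul_same]; rfl

theorem norm_toEuclideanLin_coarse_step_le (hμ : 0 < μ) (hω : 0 < ω) (hξ : 0 ≤ ξ)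
    (hH : ∀ v, μ * ‖v‖ ^ 2 ≤ ⟪v, toEuclideanLin H v⟫)
    (hlow : ∀ w, ω * ‖w‖ ≤ ‖toEuclideanLin Rᵀ w‖) (hup : ∀ w, ‖toEuclideanLin Rᵀ w‖ ≤ ξ * ‖w‖)
    (v : EuclideanSpace ℝ ι) :
    ‖toEuclideanLin (Rᵀ * (R * H * Rᵀ)⁻¹ * R) v‖ ≤ ξ ^ 2 / (μ * ω ^ 2) * ‖v‖ := by
  have hA := mul_norm_sq_le_inner_toEuclideanLin_mul_mul_transpose hμ.le hH hω.le hlow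
  simp only [toLpLin_mul_same, LinearMap.comp_apply]
  calc _ ≤ ξ * ‖toEuclideanLin (R * H * Rᵀ)⁻¹ (toEuclideanLin R v)‖ := hup _
    _ ≤ ξ * ((μ * ω ^ 2)⁻¹ * ‖toEuclideanLin R v‖) := by
      gcongr; exact norm_toEuclideanLin_inv_le (by positivity) hA _
    _ ≤ ξ * ((μ * ω ^ 2)⁻¹ * (ξ * ‖v‖)) := by
      gcongr; exact norm_toEuclideanLin_le_of_norm_transpose_le hξ hup v
    _ = ξ ^ 2 / (μ * ω ^ 2) * ‖v‖ := by field_simp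

end Matrix

theorem norm_le_mul_sq_of_coarse_step {ι κ : Type*} [Fintype ι] [Fintype κ] [DecidableEq ι]
    [DecidableEq κ] {g : EuclideanSpace ℝ ι → EuclideanSpace ℝ ι}
    {H : EuclideanSpace ℝ ι → Matrix ι ι ℝ} {R : Matrix κ ι ℝ} {x xp : EuclideanSpace ℝ ι}
    {μ L σ ω ξ : ℝ} (hg : ∀ y, HasFDerivAt g (toEuclideanCLM (𝕜 := ℝ) (H y)) y)
    (hLip : ∀ y, ‖toEuclideanCLM (𝕜 := ℝ) (H y) - toEuclideanCLM (𝕜 := ℝ) (H x)‖ ≤ L * ‖y - x‖)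
    (hL : 0 ≤ L) (hμ : 0 < μ) (hH : ∀ v, μ * ‖v‖ ^ 2 ≤ ⟪v, toEuclideanLin (H x) v⟫)
    (hω : 0 < ω) (hξ : 0 ≤ ξ) (hlow : ∀ w, ω * ‖w‖ ≤ ‖toEuclideanLin Rᵀ w‖)
    (hup : ∀ w, ‖toEuclideanLin Rᵀ w‖ ≤ ξ * ‖w‖) (hσ : 0 < σ)
    (hacc : σ * ‖g xp‖ ≤ ‖toEuclideanLin R (g xp)‖)
    (hxp : xp = x - toEuclideanLin (Rᵀ * (R * H x * Rᵀ)⁻¹ * R) (g x)) :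
    ‖g xp‖ ≤ L * ξ ^ 5 / (2 * σ * μ ^ 2 * ω ^ 4) * ‖g x‖ ^ 2 := by
  set s := toEuclideanLin (Rᵀ * (R * H x * Rᵀ)⁻¹ * R) (g x)
  have hs : ‖s‖ ≤ ξ ^ 2 / (μ * ω ^ 2) * ‖g x‖ :=
    norm_toEuclideanLin_coarse_step_le hμ hω hξ hH hlow hup (g x)
  have hRHs : toEuclideanLin R (toEuclideanLin (H x) s) = toEuclideanLin R (g x) := by
    have hA := mul_norm_sq_le_inner_toEuclideanLin_mul_mul_transpose hμ.le hH hω.le hlow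
    rw [← LinearMap.comp_apply, ← toLpLin_mul_same, ← LinearMap.comp_apply, ← toLpLin_mul_same,
      mul_mul_nonsing_inv_mul_eq _ _ _ (isUnit_det_of_coercive (by positivity) hA)]
  have hstep : xp - x = -s := by rw [hxp, sub_sub_cancel_left]
  have hres : toEuclideanLin R (g xp) =
      toEuclideanLin R (g xp - g x - toEuclideanCLM (𝕜 := ℝ) (H x) (xp - x)) := by
    rw [hstep, map_neg, map_sub, map_sub, map_neg]
    change _ = _ - _ - -toEuclideanLin R (toEuclideanLin (H x) s)
    rw [hRHs]
    abel
  refine le_of_mul_le_mul_left ?_ hσ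
  calc σ * ‖g xp‖ ≤ ‖toEuclideanLin R (g xp)‖ := hacc
    _ ≤ ξ * ‖g xp - g x - toEuclideanCLM (𝕜 := ℝ) (H x) (xp - x)‖ :=
      hres ▸ norm_toEuclideanLin_le_of_norm_transpose_le hξ hup _
    _ ≤ ξ * (L / 2 * ‖xp - x‖ ^ 2) :=
      mul_le_mul_of_nonneg_left (norm_sub_sub_fderiv_apply_le hg hLip xp) hξ
    _ = ξ * (L / 2 * ‖s‖ ^ 2) := by rw [hstep, norm_neg]
    _ ≤ ξ * (L / 2 * (ξ ^ 2 / (μ * ω ^ 2) * ‖g x‖) ^ 2) := by gcongr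
    _ = σ * (L * ξ ^ 5 / (2 * σ * μ ^ 2 * ω ^ 4) * ‖g x‖ ^ 2) := by field_simp

theorem aml_newton_quadratic_rate_xi_le_one_general
    {n : ℕ}
    (f : EuclideanSpace ℝ (Fin n) → ℝ)
    (Hess : EuclideanSpace ℝ (Fin n) → Matrix (Fin n) (Fin n) ℝ)
    (hHess : ∀ y, HasFDerivAt (gradient f) (Matrix.toEuclideanCLM (𝕜 := ℝ) (Hess y)) y)
    (μ L : ℝ) (hμ : 0 < μ) (hL : 0 < L)
    (hsc : ∀ y, (Hess y - μ • (1 : Matrix (Fin n) (Fin n) ℝ)).PosSemidef)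
    (hLip : ∀ y z, Matrix.specNorm (Hess y - Hess z) ≤ L * ‖y - z‖)
    (σ : ℝ) (hσ0 : 0 < σ) (hσ1 : σ ≤ 1)
    (ω ξ : ℝ) (hω : 0 < ω) (hωξ : ω ≤ ξ) (hξ : ξ ≤ 1)
    (x xp : EuclideanSpace ℝ (Fin n))
    (hstep :
      (∃ p : ℕ, ∃ R : Matrix (Fin p) (Fin n) ℝ, p ≤ n ∧ R.rank = p ∧
        (∀ i, R.singularValueT i ∈ Set.Icc ω ξ) ∧
        xp = x - Matrix.toEuclideanLin (Rᵀ * (R * Hess x * Rᵀ)⁻¹ * R) (gradient f x) ∧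
        σ * ‖gradient f xp‖ ≤ ‖Matrix.toEuclideanLin R (gradient f xp)‖) ∨
      xp = x - Matrix.toEuclideanLin (Hess x)⁻¹ (gradient f x)) :
    ‖gradient f xp‖ ≤ L * ξ ^ 4 / (2 * σ * μ ^ 2 * ω ^ 4) * ‖gradient f x‖ ^ 2 := by
  have hLip' (y : EuclideanSpace ℝ (Fin n)) :
      ‖toEuclideanCLM (𝕜 := ℝ) (Hess y) - toEuclideanCLM (𝕜 := ℝ) (Hess x)‖ ≤ L * ‖y - x‖ :=
    map_sub (toEuclideanCLM (𝕜 := ℝ)) (Hess y) (Hess x) ▸ hLip y x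
  have hH := (hsc x).mul_norm_sq_le_inner_toEuclideanLin
  have hξ0 : 0 < ξ := hω.trans_le hωξ
  rcases hstep with ⟨p, R, -, -, hsv, hxp, hacc⟩ | hxp
  · have hcoarse := norm_le_mul_sq_of_coarse_step hHess hLip' hL.le hμ hH hω hξ0.le
      (mul_norm_le_norm_toEuclideanLin_transpose_of_le_singularValueT hω fun i ↦ (hsv i).1)
      (norm_toEuclideanLin_transpose_le_of_singularValueT_le hξ0.le fun i ↦ (hsv i).2)
      hσ0 hacc hxp
    refine hcoarse.trans ?_
    gcongr L * ?_ / _ * _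
    exact pow_le_pow_of_le_one hξ0.le hξ (by norm_num : 4 ≤ 5)
  · have hnewton := norm_le_mul_sq_of_coarse_step (R := (1 : Matrix (Fin n) (Fin n) ℝ))
      (σ := 1) (ω := 1) (ξ := 1) hHess hLip' hL.le hμ hH one_pos zero_le_one
      (by simp) (by simp) one_pos (by simp) (by simpa using hxp)
    refine hnewton.trans (mul_le_mul_of_nonneg_right ?_ (sq_nonneg _))
    have hσω : σ * ω ^ 4 ≤ 1 * ξ ^ 4 :=
      mul_le_mul hσ1 (pow_le_pow_left₀ hω.le hωξ 4) (by positivity) zero_le_one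
    rw [div_le_div_iff₀ (by positivity) (by positivity)]
    nlinarith [mul_le_mul_of_nonneg_left hσω (by positivity : 0 ≤ 2 * L * μ ^ 2)]

/-- Theorem 4.3, case `ξ ≤ 1`. One step of the adaptive multilevel Newton
method (either an accepted coarse step or a full Newton step) satisfies
`‖∇f(x⁺)‖ ≤ (Lξ⁴/(2σμ²ω⁴)) ‖∇f(x)‖²`. -/
theorem aml_newton_quadratic_rate_xi_le_one
    {n : ℕ}
    (f : EuclideanSpace ℝ (Fin n) → ℝ)
    (hf : ContDiff ℝ 2 f)
    (Hess : EuclideanSpace ℝ (Fin n) → Matrix (Fin n) (Fin n) ℝ)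
    (hHess : ∀ y, HasFDerivAt (gradient f) (Matrix.toEuclideanCLM (𝕜 := ℝ) (Hess y)) y)
    (μ L : ℝ) (hμ : 0 < μ) (hL : 0 < L)
    (hsc : ∀ y, (Hess y - μ • (1 : Matrix (Fin n) (Fin n) ℝ)).PosSemidef)
    (hLip : ∀ y z, Matrix.specNorm (Hess y - Hess z) ≤ L * ‖y - z‖)
    (σ : ℝ) (hσ0 : 0 < σ) (hσ1 : σ ≤ 1)
    (ω ξ : ℝ) (hω : 0 < ω) (hωξ : ω ≤ ξ) (hξ : ξ ≤ 1)
    (x xp : EuclideanSpace ℝ (Fin n))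
    (hstep :
      (∃ p : ℕ, ∃ R : Matrix (Fin p) (Fin n) ℝ, p ≤ n ∧ R.rank = p ∧
        (∀ i, R.singularValueT i ∈ Set.Icc ω ξ) ∧
        xp = x - Matrix.toEuclideanLin (Rᵀ * (R * Hess x * Rᵀ)⁻¹ * R) (gradient f x) ∧
        σ * ‖gradient f xp‖ ≤ ‖Matrix.toEuclideanLin R (gradient f xp)‖) ∨
      xp = x - Matrix.toEuclideanLin (Hess x)⁻¹ (gradient f x)) :
    ‖gradient f xp‖ ≤ L * ξ ^ 4 / (2 * σ * μ ^ 2 * ω ^ 4) * ‖gradient f x‖ ^ 2 :=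
  aml_newton_quadratic_rate_xi_le_one_general f Hess hHess μ L hμ hL hsc hLip σ hσ0 hσ1 ω ξ hω hωξ
    hξ x xp hstep

end
end

section
/- Let f : ℝⁿ → ℝ be twice continuously differentiable, μ-strongly convex with μ > 0, and with L-Lipschitz Hessian, L > 0, and let σ ∈ (0,1]. For each k ∈ ℕ, let R_k ∈ ℝ^{p_k×n} be a matrix with orthonormal rows (R_k R_kᵀ = I_{p_k}), and let the sequence (x_k) satisfy, for every k: x_{k+1} = x_k − R_kᵀ(R_k∇²f(x_k)R_kᵀ)⁻¹R_k∇f(x_k) and the acceptance condition ‖R_k∇f(x_{k+1})‖ ≥ σ‖∇f(x_{k+1})‖. Assume ∇f(x_k) ≠ 0 for all k and ‖∇f(x₀)‖ < 2σμ²/L. Then R_k∇f(x_k) ≠ 0 for all k, and, setting a_k := ‖R_k∇f(x_{k+1})‖ / ‖R_k∇f(x_k)‖, there exists K ∈ ℕ such that for all k ≥ K one has a_k < σ and ‖∇f(x_{k+1})‖ < ‖∇f(x_k)‖. -/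
/-!
By the Lipschitz Hessian, the coarse step `d` leaves the gradient residual
`∇f(x - d) - ∇f(x) + ∇²f(x) d` of size at most `L‖d‖²/2`. Applying `R` kills the first-order
part, since `d` solves the reduced Newton equation `R ∇²f(x) d = R ∇f(x)`, and strong convexity of
the reduced Hessian gives `μ‖d‖ ≤ ‖R∇f(x)‖`; hence `2μ²‖R∇f(x⁺)‖ ≤ L‖R∇f(x)‖²`. With the
acceptance condition and `‖R v‖ ≤ ‖v‖` this becomes `c‖∇f(x_{k+1})‖ ≤ ‖∇f(x_k)‖²` for
`c = 2σμ²/L`, and `‖∇f(x₀)‖ < c` makes the gradient norms strictly decreasing and below `c`,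
which bounds the ratios `a_k` by `L‖∇f(x_k)‖/(2μ²) < σ`.
-/

open Matrix

noncomputable section

open scoped RealInnerProductSpace

theorem norm_sub_sub_fderiv_le_of_lipschitz {E F : Type*} [NormedAddCommGroup E]
    [NormedSpace ℝ E] [NormedAddCommGroup F] [NormedSpace ℝ F] {g : E → F} {g' : E → E →L[ℝ] F}
    {L : ℝ} (hg : ∀ y, HasFDerivAt g (g' y) y) (hLip : ∀ y z, ‖g' y - g' z‖ ≤ L * ‖y - z‖)
    (x d : E) : ‖g (x + d) - g x - g' x d‖ ≤ L / 2 * ‖d‖ ^ 2 := by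
  set φ : ℝ → F := fun t => g (x + t • d) - g x - t • g' x d
  have hφ : ∀ t, HasDerivAt φ (g' (x + t • d) d - g' x d) t := fun t => by
    have hline : HasDerivAt (fun t : ℝ => x + t • d) d t := by
      simpa using ((hasDerivAt_id t).smul_const d).const_add x
    exact ((((hg _).comp_hasDerivAt t hline).sub_const (g x)).sub
      ((hasDerivAt_id' t).smul_const (g' x d))).congr_deriv (by rw [one_smul])
  have hB : ∀ t, HasDerivAt (fun t : ℝ => L / 2 * ‖d‖ ^ 2 * t ^ 2) (L * ‖d‖ ^ 2 * t) t :=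
    fun t => ((hasDerivAt_pow 2 t).const_mul _).congr_deriv (by push_cast; ring)
  have hbound : ∀ t ∈ Set.Ico (0 : ℝ) 1, ‖g' (x + t • d) d - g' x d‖ ≤ L * ‖d‖ ^ 2 * t := by
    rintro t ⟨ht, -⟩
    calc ‖g' (x + t • d) d - g' x d‖ = ‖(g' (x + t • d) - g' x) d‖ := rfl
      _ ≤ ‖g' (x + t • d) - g' x‖ * ‖d‖ := ContinuousLinearMap.le_opNorm _ _
      _ ≤ L * ‖t • d‖ * ‖d‖ := by gcongr; simpa using hLip (x + t • d) x
      _ = L * ‖d‖ ^ 2 * t := by rw [norm_smul, Real.norm_of_nonneg ht]; ring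
  simpa [φ] using image_norm_le_of_norm_deriv_right_le_deriv_boundary
    (fun t _ => (hφ t).continuousAt.continuousWithinAt) (fun t _ => (hφ t).hasDerivWithinAt)
    (by simp [φ]) hB hbound (Set.right_mem_Icc.2 zero_le_one)

namespace Matrix

theorem specNorm_sub_eq_norm_toEuclideanCLM_sub {n : ℕ} (A B : Matrix (Fin n) (Fin n) ℝ) :
    (A - B).specNorm = ‖toEuclideanCLM (𝕜 := ℝ) A - toEuclideanCLM (𝕜 := ℝ) B‖ := by
  rw [← map_sub]; rfl

variable {m n : Type*} [Fintype m] [Fintype n] [DecidableEq m]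

theorem mul_mul_transpose_mul_inv_mul_cancel {R : Matrix m n ℝ} {H : Matrix n n ℝ}
    (h : IsUnit (R * H * Rᵀ)) : R * H * (Rᵀ * (R * H * Rᵀ)⁻¹ * R) = R := by
  simp only [← Matrix.mul_assoc]
  rw [mul_nonsing_inv _ ((isUnit_iff_isUnit_det _).1 h), Matrix.one_mul]

variable [DecidableEq n]

theorem inner_toEuclideanLin_transpose_apply (A : Matrix m n ℝ) (w : EuclideanSpace ℝ m)
    (v : EuclideanSpace ℝ n) : ⟪toEuclideanLin Aᵀ w, v⟫ = ⟪w, toEuclideanLin A v⟫ := by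
  rw [← conjTranspose_eq_transpose_of_trivial, toEuclideanLin_conjTranspose_eq_adjoint,
    LinearMap.adjoint_inner_left]

section OrthonormalRows

variable {R : Matrix m n ℝ}

theorem norm_toEuclideanLin_transpose_apply (hR : R * Rᵀ = 1) (v : EuclideanSpace ℝ m) :
    ‖toEuclideanLin Rᵀ v‖ = ‖v‖ := by
  have : ‖toEuclideanLin Rᵀ v‖ ^ 2 = ‖v‖ ^ 2 := by
    rw [← real_inner_self_eq_norm_sq, ← real_inner_self_eq_norm_sq,
      inner_toEuclideanLin_transpose_apply, ← LinearMap.comp_apply, ← toLpLin_mul_same, hR,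
      toLpLin_one, LinearMap.id_apply]
  exact (sq_eq_sq₀ (norm_nonneg _) (norm_nonneg _)).1 this

theorem norm_toEuclideanLin_apply_le (hR : R * Rᵀ = 1) (v : EuclideanSpace ℝ n) :
    ‖toEuclideanLin R v‖ ≤ ‖v‖ := by
  have h : ‖toEuclideanLin R v‖ ^ 2 ≤ ‖toEuclideanLin R v‖ * ‖v‖ := by
    calc ‖toEuclideanLin R v‖ ^ 2 = ⟪toEuclideanLin Rᵀ (toEuclideanLin R v), v⟫ := by
          rw [inner_toEuclideanLin_transpose_apply, real_inner_self_eq_norm_sq]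
      _ ≤ ‖toEuclideanLin Rᵀ (toEuclideanLin R v)‖ * ‖v‖ := real_inner_le_norm _ _
      _ = ‖toEuclideanLin R v‖ * ‖v‖ := by rw [norm_toEuclideanLin_transpose_apply hR]
  rcases (norm_nonneg (toEuclideanLin R v)).eq_or_lt with h0 | h0
  · exact h0 ▸ norm_nonneg v
  · exact le_of_mul_le_mul_left (by rwa [sq] at h) h0

end OrthonormalRows

namespace PosSemidef

variable {μ : ℝ}

theorem mul_norm_sq_le_inner {H : Matrix n n ℝ} (h : (H - μ • 1).PosSemidef)
    (v : EuclideanSpace ℝ n) : μ * ‖v‖ ^ 2 ≤ ⟪v, toEuclideanLin H v⟫ := by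
  have := (isPositive_toEuclideanLin_iff.2 h).2 v
  simpa [inner_sub_left, real_inner_comm, real_inner_smul_right, real_inner_self_eq_norm_sq]
    using this

theorem mul_mul_transpose_sub_smul_one {H : Matrix n n ℝ} (h : (H - μ • 1).PosSemidef)
    {R : Matrix m n ℝ} (hR : R * Rᵀ = 1) : (R * H * Rᵀ - μ • 1).PosSemidef := by
  have := h.mul_mul_conjTranspose_same R
  rwa [conjTranspose_eq_transpose_of_trivial, Matrix.mul_sub, Matrix.sub_mul, Matrix.mul_smul,
    Matrix.mul_one, Matrix.smul_mul, hR] at this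

theorem isUnit_of_sub_smul_one {B : Matrix m m ℝ} (hμ : 0 < μ) (h : (B - μ • 1).PosSemidef) :
    IsUnit B := by
  simpa using ((PosDef.one.smul hμ).add_posSemidef h).isUnit

theorem mul_norm_toEuclideanLin_inv_apply_le {B : Matrix m m ℝ} (hμ : 0 < μ)
    (h : (B - μ • 1).PosSemidef) (w : EuclideanSpace ℝ m) :
    μ * ‖toEuclideanLin B⁻¹ w‖ ≤ ‖w‖ := by
  set u := toEuclideanLin B⁻¹ w
  have hu : toEuclideanLin B u = w := by
    rw [← LinearMap.comp_apply, ← toLpLin_mul_same, mul_nonsing_inv _ ((isUnit_iff_isUnit_det B).1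
      (isUnit_of_sub_smul_one hμ h)), toLpLin_one, LinearMap.id_apply]
  have key : μ * ‖u‖ ^ 2 ≤ ‖u‖ * ‖w‖ :=
    (h.mul_norm_sq_le_inner u).trans (hu ▸ real_inner_le_norm u w)
  rcases (norm_nonneg u).eq_or_lt with h0 | h0
  · rw [← h0, mul_zero]; exact norm_nonneg w
  · exact le_of_mul_le_mul_left (by nlinarith) h0

end PosSemidef

theorem mul_norm_coarseNewton_apply_le {R : Matrix m n ℝ} (hR : R * Rᵀ = 1) {H : Matrix n n ℝ}
    {μ : ℝ} (hμ : 0 < μ) (hH : (H - μ • 1).PosSemidef) (v : EuclideanSpace ℝ n) :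
    μ * ‖toEuclideanLin (Rᵀ * (R * H * Rᵀ)⁻¹ * R) v‖ ≤ ‖toEuclideanLin R v‖ := by
  rw [toLpLin_mul_same, toLpLin_mul_same, LinearMap.comp_apply, LinearMap.comp_apply,
    norm_toEuclideanLin_transpose_apply hR]
  exact (hH.mul_mul_transpose_sub_smul_one hR).mul_norm_toEuclideanLin_inv_apply_le hμ _

end Matrix

theorem coarseNewton_reduced_residual_le {n : ℕ} {m : Type*} [Fintype m] [DecidableEq m]
    {g : EuclideanSpace ℝ (Fin n) → EuclideanSpace ℝ (Fin n)}
    {H : EuclideanSpace ℝ (Fin n) → Matrix (Fin n) (Fin n) ℝ}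
    (hg : ∀ y, HasFDerivAt g (toEuclideanCLM (𝕜 := ℝ) (H y)) y)
    {L : ℝ} (hL : 0 ≤ L) (hLip : ∀ y z, (H y - H z).specNorm ≤ L * ‖y - z‖)
    {R : Matrix m (Fin n) ℝ} (hR : R * Rᵀ = 1) {μ : ℝ} (hμ : 0 < μ) {x : EuclideanSpace ℝ (Fin n)}
    (hx : (H x - μ • 1).PosSemidef) :
    2 * μ ^ 2 * ‖toEuclideanLin R (g (x - toEuclideanLin (Rᵀ * (R * H x * Rᵀ)⁻¹ * R) (g x)))‖ ≤
      L * ‖toEuclideanLin R (g x)‖ ^ 2 := by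
  set d := toEuclideanLin (Rᵀ * (R * H x * Rᵀ)⁻¹ * R) (g x)
  have hcancel : toEuclideanLin R (toEuclideanLin (H x) d) = toEuclideanLin R (g x) := by
    rw [← LinearMap.comp_apply, ← toLpLin_mul_same, ← LinearMap.comp_apply, ← toLpLin_mul_same,
      mul_mul_transpose_mul_inv_mul_cancel
        (PosSemidef.isUnit_of_sub_smul_one hμ (hx.mul_mul_transpose_sub_smul_one hR))]
  have hres : toEuclideanLin R (g (x - d)) =
      toEuclideanLin R (g (x + -d) - g x - toEuclideanCLM (𝕜 := ℝ) (H x) (-d)) := by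
    rw [← sub_eq_add_neg, map_neg, sub_neg_eq_add, map_add, map_sub, ← hcancel]
    exact (sub_add_cancel _ _).symm
  have htaylor := norm_sub_sub_fderiv_le_of_lipschitz hg
    (fun y z => (specNorm_sub_eq_norm_toEuclideanCLM_sub _ _).symm.trans_le (hLip y z)) x (-d)
  have hd := mul_norm_coarseNewton_apply_le hR hμ hx (g x)
  calc 2 * μ ^ 2 * ‖toEuclideanLin R (g (x - d))‖
      ≤ 2 * μ ^ 2 * (L / 2 * ‖d‖ ^ 2) := by
        rw [hres]
        gcongr
        exact (norm_toEuclideanLin_apply_le hR _).trans (by simpa using htaylor)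
    _ = L * (μ * ‖d‖) ^ 2 := by ring
    _ ≤ L * ‖toEuclideanLin R (g x)‖ ^ 2 := by gcongr

theorem strictAnti_of_mul_succ_le_sq {e : ℕ → ℝ} {c : ℝ} (hpos : ∀ k, 0 < e k)
    (hrec : ∀ k, c * e (k + 1) ≤ e k ^ 2) (h0 : e 0 < c) : StrictAnti e := by
  have hc : 0 < c := (hpos 0).trans h0
  have hstep : ∀ k, e k < c → e (k + 1) < e k := fun k hk =>
    lt_of_mul_lt_mul_left
      ((hrec k).trans_lt (by rw [sq]; exact mul_lt_mul_of_pos_right hk (hpos k))) hc.le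
  have hlt : ∀ k, e k < c := fun k => Nat.rec h0 (fun k hk => (hstep k hk).trans hk) k
  exact strictAnti_nat_of_succ_lt fun k => hstep k (hlt k)

theorem aml_newton_eventually_quadratic_general
    {n : ℕ}
    (f : EuclideanSpace ℝ (Fin n) → ℝ)
    (Hess : EuclideanSpace ℝ (Fin n) → Matrix (Fin n) (Fin n) ℝ)
    (hHess : ∀ y, HasFDerivAt (gradient f) (Matrix.toEuclideanCLM (𝕜 := ℝ) (Hess y)) y)
    (μ L : ℝ) (hμ : 0 < μ) (hL : 0 < L)
    (hsc : ∀ y, (Hess y - μ • (1 : Matrix (Fin n) (Fin n) ℝ)).PosSemidef)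
    (hLip : ∀ y z, Matrix.specNorm (Hess y - Hess z) ≤ L * ‖y - z‖)
    (σ : ℝ) (hσ0 : 0 < σ)
    (p : ℕ → ℕ) (R : ∀ k, Matrix (Fin (p k)) (Fin n) ℝ)
    (hortho : ∀ k, R k * (R k)ᵀ = 1)
    (x : ℕ → EuclideanSpace ℝ (Fin n))
    (hstep : ∀ k, x (k + 1) = x k -
      Matrix.toEuclideanLin ((R k)ᵀ * (R k * Hess (x k) * (R k)ᵀ)⁻¹ * R k) (gradient f (x k)))
    (hacc : ∀ k, σ * ‖gradient f (x (k + 1))‖ ≤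
      ‖Matrix.toEuclideanLin (R k) (gradient f (x (k + 1)))‖)
    (hnz : ∀ k, gradient f (x k) ≠ 0)
    (h0 : ‖gradient f (x 0)‖ < 2 * σ * μ ^ 2 / L) :
    (∀ k, Matrix.toEuclideanLin (R k) (gradient f (x k)) ≠ 0) ∧
    ∃ K : ℕ, ∀ k ≥ K,
      ‖Matrix.toEuclideanLin (R k) (gradient f (x (k + 1)))‖ /
          ‖Matrix.toEuclideanLin (R k) (gradient f (x k))‖ < σ ∧
      ‖gradient f (x (k + 1))‖ < ‖gradient f (x k)‖ := by
  have hquad (k : ℕ) : 2 * μ ^ 2 * ‖toEuclideanLin (R k) (gradient f (x (k + 1)))‖ ≤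
      L * ‖toEuclideanLin (R k) (gradient f (x k))‖ ^ 2 :=
    hstep k ▸ coarseNewton_reduced_residual_le hHess hL.le hLip (hortho k) hμ (hsc _)
  have hproj (k : ℕ) : ‖toEuclideanLin (R k) (gradient f (x k))‖ ≤ ‖gradient f (x k)‖ :=
    norm_toEuclideanLin_apply_le (hortho k) _
  have hpos (k : ℕ) : 0 < ‖gradient f (x k)‖ := norm_pos_iff.2 (hnz k)
  have hanti : StrictAnti fun k => ‖gradient f (x k)‖ := by
    refine strictAnti_of_mul_succ_le_sq hpos (fun k => ?_) h0
    rw [div_mul_eq_mul_div, div_le_iff₀ hL]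
    nlinarith [hacc k, hquad k, pow_le_pow_left₀ (norm_nonneg _) (hproj k) 2, pow_pos hμ 2]
  have hRnz (k : ℕ) : toEuclideanLin (R k) (gradient f (x k)) ≠ 0 := by
    intro h
    have := hquad k
    rw [h, norm_zero] at this
    nlinarith [hacc k, mul_pos hσ0 (hpos (k + 1)), pow_pos hμ 2]
  refine ⟨hRnz, 0, fun k _ => ⟨?_, hanti k.lt_succ_self⟩⟩
  have hsmall : L * ‖gradient f (x k)‖ < 2 * σ * μ ^ 2 :=
    (lt_div_iff₀' hL).1 ((hanti.antitone k.zero_le).trans_lt h0)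
  have hr : 0 < ‖toEuclideanLin (R k) (gradient f (x k))‖ := norm_pos_iff.2 (hRnz k)
  rw [div_lt_iff₀ hr]
  nlinarith [hquad k, mul_le_mul_of_nonneg_left (hproj k) (mul_nonneg hL.le hr.le),
    mul_lt_mul_of_pos_right hsmall hr, pow_pos hμ 2]

/-- Theorem 4.4. For the adaptive multilevel Newton iteration with
orthonormal-row restrictions, started with `‖∇f(x₀)‖ < 2σμ²/L`, the reduced gradients never
vanish and eventually the reduction ratios drop below `σ` while the gradient norms strictly
decrease. -/
theorem aml_newton_eventually_quadratic
    {n : ℕ}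
    (f : EuclideanSpace ℝ (Fin n) → ℝ)
    (hf : ContDiff ℝ 2 f)
    (Hess : EuclideanSpace ℝ (Fin n) → Matrix (Fin n) (Fin n) ℝ)
    (hHess : ∀ y, HasFDerivAt (gradient f) (Matrix.toEuclideanCLM (𝕜 := ℝ) (Hess y)) y)
    (μ L : ℝ) (hμ : 0 < μ) (hL : 0 < L)
    (hsc : ∀ y, (Hess y - μ • (1 : Matrix (Fin n) (Fin n) ℝ)).PosSemidef)
    (hLip : ∀ y z, Matrix.specNorm (Hess y - Hess z) ≤ L * ‖y - z‖)
    (σ : ℝ) (hσ0 : 0 < σ) (hσ1 : σ ≤ 1)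
    (p : ℕ → ℕ) (R : ∀ k, Matrix (Fin (p k)) (Fin n) ℝ)
    (hortho : ∀ k, R k * (R k)ᵀ = 1)
    (x : ℕ → EuclideanSpace ℝ (Fin n))
    (hstep : ∀ k, x (k + 1) = x k -
      Matrix.toEuclideanLin ((R k)ᵀ * (R k * Hess (x k) * (R k)ᵀ)⁻¹ * R k) (gradient f (x k)))
    (hacc : ∀ k, σ * ‖gradient f (x (k + 1))‖ ≤
      ‖Matrix.toEuclideanLin (R k) (gradient f (x (k + 1)))‖)
    (hnz : ∀ k, gradient f (x k) ≠ 0)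
    (h0 : ‖gradient f (x 0)‖ < 2 * σ * μ ^ 2 / L) :
    (∀ k, Matrix.toEuclideanLin (R k) (gradient f (x k)) ≠ 0) ∧
    ∃ K : ℕ, ∀ k ≥ K,
      ‖Matrix.toEuclideanLin (R k) (gradient f (x (k + 1)))‖ /
          ‖Matrix.toEuclideanLin (R k) (gradient f (x k))‖ < σ ∧
      ‖gradient f (x (k + 1))‖ < ‖gradient f (x k)‖ :=
  aml_newton_eventually_quadratic_general f Hess hHess μ L hμ hL hsc hLip σ hσ0 p R hortho x hstep
    hacc hnz h0

end
end
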